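/- arXiv:1511.04250 — 2 statements merged into one kernel-verified Lean document; each statement's English description precedes it below -/
import Mathlib

section
/- Let φ: ℝ² → ℝ be given by φ(x,y) = sin(2πx)·sin(2πy). Then for every w = (w₁,w₂) ∈ ℝ², the limit lim_{T→∞} ψ_T^0(w) exists and equals (|w₁| + |w₂|)², the square of the ℓ¹ norm of w. -/
open MeasureTheory Filter
open scoped ENNReal Topology

noncomputable section

abbrev Euc (n : ℕ) : Type := EuclideanSpace ℝ (Fin n)

/-- `u` is an `H¹` curve on `[a,b]` with (a.e.) derivative `u'`. -/
def IsH1On {n : ℕ} (u u' : ℝ → Euc n) (a b : ℝ) : Prop :=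
  IntervalIntegrable u' volume a b ∧
  IntervalIntegrable (fun t => ‖u' t‖ ^ 2) volume a b ∧
  ∀ t ∈ Set.Icc a b, u t = u a + ∫ s in a..t, u' s

/-- The localized homogenization energy `ψ_T^z(w)` (value `⊤` if no admissible curve exists). -/
def psiT {n : ℕ} {α : Type*} (φ : Euc n → α) (z : α) (T : ℝ) (w : Euc n) : ℝ≥0∞ :=
  ENNReal.ofReal (1 / T) *
    sInf {e : ℝ≥0∞ | ∃ u u' : ℝ → Euc n, IsH1On u u' 0 T ∧
      (∀ t ∈ Set.Icc (0 : ℝ) T, φ (u t) = z) ∧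
      ‖u 0‖ ≤ Real.sqrt (n : ℝ) ∧ ‖u T - T • w‖ ≤ Real.sqrt (n : ℝ) ∧
      e = ENNReal.ofReal (∫ t in (0 : ℝ)..T, ‖u' t‖ ^ 2)}

/-!
On the zero set of `φ` one coordinate of the curve lies in `½ℤ` at every time. Zeros of
`sin (2π ·)` are `½`-separated, so by continuity that coordinate is locally constant on the set of
times where it lies in `½ℤ`, and its derivative vanishes almost everywhere there. Hence
`|u₀'| + |u₁'| ≤ ‖u'‖` a.e.: the length of an admissible curve dominates its `ℓ¹` displacement,
which is `T (|w₀| + |w₁|) - O(1)`, and Cauchy–Schwarz turns this into the lower bound on the energy.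
Conversely, the constant-speed path that runs along the first axis to the grid line
`x = round (2 T w₀) / 2` and then parallel to the second axis has energy
`T (|w₀| + |w₁| + O(1/T))²`.
-/

open Set Real intervalIntegral

theorem ae_eq_zero_of_hasDerivAt_of_eventually_eq {E : Type*} [NormedAddCommGroup E]
    [NormedSpace ℝ E] {f : ℝ → E} {s : Set ℝ} (hf : ∀ x ∈ s, ∀ᶠ y in 𝓝[s] x, f y = f x) :
    ∀ᵐ x, x ∈ s → ∀ c, HasDerivAt f c x → c = 0 := by
  -- Off the countably many points of `s` isolated from the right, the slopes of `f` vanish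
  -- along the nontrivial filter `𝓝[s ∩ Ioi x] x`.
  filter_upwards [countable_setOfPred_isolated_right_within.ae_notMem volume]
    with x hx hxs c hc
  have : (𝓝[s ∩ Ioi x] x).NeBot := ⟨fun h => hx ⟨hxs, h⟩⟩
  have hslope : Tendsto (slope f x) (𝓝[s ∩ Ioi x] x) (𝓝 c) :=
    (hasDerivAt_iff_tendsto_slope.1 hc).mono_left
      (nhdsWithin_mono _ fun y hy => ne_of_gt hy.2)
  have hflat : slope f x =ᶠ[𝓝[s ∩ Ioi x] x] fun _ => 0 := by
    filter_upwards [nhdsWithin_mono x inter_subset_left (hf x hxs)] with y hy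
    simp [slope, hy]
  exact tendsto_nhds_unique hslope (tendsto_const_nhds.congr' hflat.symm)

theorem sq_intervalIntegral_le_mul_integral_sq {g : ℝ → ℝ} {a b : ℝ} (hab : a ≤ b)
    (hg : IntervalIntegrable g volume a b)
    (hg2 : IntervalIntegrable (fun t => g t ^ 2) volume a b) :
    (∫ t in a..b, g t) ^ 2 ≤ (b - a) * ∫ t in a..b, g t ^ 2 := by
  -- the quadratic `x ↦ ∫ (x - g)²` is nonnegative, so its discriminant is nonpositive
  have hquad : ∀ x : ℝ,
      0 ≤ (b - a) * (x * x) + (-2 * ∫ t in a..b, g t) * x + ∫ t in a..b, g t ^ 2 := by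
    intro x
    have hexp : ∫ t in a..b, (x * x - 2 * x * g t + g t ^ 2) =
        (b - a) * (x * x) + (-2 * ∫ t in a..b, g t) * x + ∫ t in a..b, g t ^ 2 := by
      rw [integral_add (intervalIntegrable_const.sub (hg.const_mul _)) hg2,
        integral_sub intervalIntegrable_const (hg.const_mul _),
        intervalIntegral.integral_const, smul_eq_mul, intervalIntegral.integral_const_mul]
      ring
    rw [← hexp]
    exact integral_nonneg hab fun t _ => by nlinarith [sq_nonneg (x - g t)]
  have := discrim_le_zero hquad
  rw [discrim] at this
  nlinarith

theorem eq_of_sin_two_pi_mul_eq_zero {x y : ℝ} (hx : sin (2 * π * x) = 0)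
    (hy : sin (2 * π * y) = 0) (hxy : |x - y| < 1 / 2) : x = y := by
  obtain ⟨m, hm⟩ := sin_eq_zero_iff.1 hx
  obtain ⟨k, hk⟩ := sin_eq_zero_iff.1 hy
  have hx' : x = m / 2 := by
    field_simp; nlinarith [pi_pos]
  have hy' : y = k / 2 := by
    field_simp; nlinarith [pi_pos]
  have hmk : |((m - k : ℤ) : ℝ)| < 1 := by
    push_cast; rw [hx', hy'] at hxy; rw [abs_lt] at hxy ⊢; constructor <;> linarith
  have : m = k := by
    rw [← Int.cast_abs, ← Int.cast_one, Int.cast_lt, abs_lt] at hmk; omega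
  rw [hx', hy', this]

theorem hasDerivWithinAt_min_Ioi (τ t : ℝ) :
    HasDerivWithinAt (fun s => min s τ) (if t < τ then 1 else 0) (Ioi t) t := by
  split_ifs with h
  · exact ((hasDerivAt_id t).congr_of_eventuallyEq
      (by filter_upwards [Iio_mem_nhds h] with s hs using min_eq_left hs.le)).hasDerivWithinAt
  · exact (hasDerivWithinAt_const t _ τ).congr
      (fun s hs => min_eq_right ((not_lt.1 h).trans (le_of_lt hs))) (min_eq_right (not_lt.1 h))

section TwoLegPath
variable {E : Type*} [NormedAddCommGroup E]

theorem intervalIntegrable_ite_lt (τ : ℝ) (C₁ C₂ : E) (a b : ℝ) :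
    IntervalIntegrable (fun t => if t < τ then C₁ else C₂) volume a b := by
  refine (intervalIntegrable_const (c := ‖C₁‖ + ‖C₂‖)).mono_fun' ?_ ?_
  · exact (StronglyMeasurable.ite measurableSet_Iio stronglyMeasurable_const
      stronglyMeasurable_const).aestronglyMeasurable
  · filter_upwards with t
    split_ifs <;> simp

variable [NormedSpace ℝ E]

def twoLegPath (τ : ℝ) (C₁ C₂ : E) (t : ℝ) : E := min t τ • C₁ + (t - min t τ) • C₂

theorem hasDerivWithinAt_twoLegPath (τ : ℝ) (C₁ C₂ : E) (t : ℝ) :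
    HasDerivWithinAt (twoLegPath τ C₁ C₂) (if t < τ then C₁ else C₂) (Ioi t) t := by
  convert ((hasDerivWithinAt_min_Ioi τ t).smul_const C₁).add
    (((hasDerivWithinAt_id t _).sub (hasDerivWithinAt_min_Ioi τ t)).smul_const C₂) using 1
  · rfl
  · split_ifs <;> simp

theorem integral_ite_lt [CompleteSpace E] (τ : ℝ) (C₁ C₂ : E) {a b : ℝ} (hab : a ≤ b) :
    ∫ t in a..b, (if t < τ then C₁ else C₂) = twoLegPath τ C₁ C₂ b - twoLegPath τ C₁ C₂ a :=
  integral_eq_sub_of_hasDeriv_right_of_le hab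
    (by unfold twoLegPath; fun_prop)
    (fun t _ => hasDerivWithinAt_twoLegPath τ C₁ C₂ t) (intervalIntegrable_ite_lt τ C₁ C₂ a b)

end TwoLegPath

section H1Curves
variable {n : ℕ} {u u' : ℝ → Euc n} {a b : ℝ}

theorem IsH1On.continuousOn (hab : a ≤ b) (hu : IsH1On u u' a b) :
    ContinuousOn u (Icc a b) := by
  have h := (continuousOn_primitive_interval' hu.1 left_mem_uIcc).const_add (u a)
  rw [uIcc_of_le hab] at h
  exact h.congr hu.2.2

theorem IsH1On.ae_hasDerivAt (hu : IsH1On u u' a b) :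
    ∀ᵐ t, t ∈ Ioo a b → HasDerivAt u (u' t) t := by
  filter_upwards [hu.1.ae_hasDerivAt_integral] with t ht hmem
  have hab : a ≤ b := (hmem.1.trans hmem.2).le
  have hIcc : t ∈ uIcc a b := by rw [uIcc_of_le hab]; exact Ioo_subset_Icc_self hmem
  refine ((ht hIcc a left_mem_uIcc).const_add (u a)).congr_of_eventuallyEq ?_
  filter_upwards [Icc_mem_nhds hmem.1 hmem.2] with s hs using hu.2.2 s hs

theorem IsH1On.ae_apply_eq_zero_of_sin_eq_zero (hab : a ≤ b) (hu : IsH1On u u' a b)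
    (i : Fin n) : ∀ᵐ t, t ∈ Ioo a b → sin (2 * π * u t i) = 0 → u' t i = 0 := by
  set s := Icc a b ∩ {t | sin (2 * π * u t i) = 0}
  have hconst : ∀ x ∈ s, ∀ᶠ y in 𝓝[s] x, u y i = u x i := by
    intro x hx
    have hcont : ContinuousWithinAt (fun t => u t i) (Icc a b) x :=
      ((PiLp.continuous_apply 2 _ i).comp_continuousOn (hu.continuousOn hab)) x hx.1
    filter_upwards [nhdsWithin_mono x inter_subset_left
      (hcont.eventually (Metric.ball_mem_nhds _ one_half_pos)), self_mem_nhdsWithin]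
      with y hy hys
    exact eq_of_sin_two_pi_mul_eq_zero hys.2 hx.2 hy
  filter_upwards [ae_eq_zero_of_hasDerivAt_of_eventually_eq hconst, hu.ae_hasDerivAt]
    with t hzero hderiv ht hsin
  exact hzero ⟨Ioo_subset_Icc_self ht, hsin⟩ _
    ((EuclideanSpace.proj i : Euc n →L[ℝ] ℝ).hasFDerivAt.comp_hasDerivAt t (hderiv ht))

end H1Curves

section Energy
variable {n : ℕ} {α : Type*} {φ : Euc n → α} {z : α} {T c : ℝ} {w : Euc n}

theorem psiT_le_ofReal (hT : 0 < T) {u u' : ℝ → Euc n} (hu : IsH1On u u' 0 T)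
    (hφ : ∀ t ∈ Icc 0 T, φ (u t) = z) (h0 : ‖u 0‖ ≤ √n) (hT' : ‖u T - T • w‖ ≤ √n)
    (henergy : ∫ t in (0 : ℝ)..T, ‖u' t‖ ^ 2 ≤ T * c) :
    psiT φ z T w ≤ ENNReal.ofReal c := by
  calc psiT φ z T w
        ≤ ENNReal.ofReal (1 / T) * ENNReal.ofReal (∫ t in (0 : ℝ)..T, ‖u' t‖ ^ 2) := by
        unfold psiT
        gcongr
        exact sInf_le ⟨u, u', hu, hφ, h0, hT', rfl⟩
    _ ≤ ENNReal.ofReal (1 / T) * ENNReal.ofReal (T * c) := by gcongr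
    _ = ENNReal.ofReal c := by
        rw [← ENNReal.ofReal_mul (by positivity), one_div, inv_mul_cancel_left₀ hT.ne']

theorem ofReal_le_psiT (hT : 0 < T)
    (h : ∀ u u' : ℝ → Euc n, IsH1On u u' 0 T → (∀ t ∈ Icc 0 T, φ (u t) = z) →
      ‖u 0‖ ≤ √n → ‖u T - T • w‖ ≤ √n → T * c ≤ ∫ t in (0 : ℝ)..T, ‖u' t‖ ^ 2) :
    ENNReal.ofReal c ≤ psiT φ z T w := by
  calc ENNReal.ofReal c = ENNReal.ofReal (1 / T) * ENNReal.ofReal (T * c) := by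
        rw [← ENNReal.ofReal_mul (by positivity), one_div, inv_mul_cancel_left₀ hT.ne']
    _ ≤ psiT φ z T w := by
        refine mul_le_mul_right (le_sInf ?_) _
        rintro _ ⟨u, u', hu, hφ, h0, hT', rfl⟩
        exact ENNReal.ofReal_le_ofReal (h u u' hu hφ h0 hT')

end Energy

def sinGrid (p : Euc 2) : ℝ := sin (2 * π * p 0) * sin (2 * π * p 1)

theorem abs_add_abs_le_norm_of_or {p : Euc 2} (h : p 0 = 0 ∨ p 1 = 0) :
    |p 0| + |p 1| ≤ ‖p‖ := by
  rcases h with h | h <;> simpa [h] using PiLp.norm_apply_le p _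

theorem IsH1On.abs_sub_add_abs_sub_le_integral_norm {u u' : ℝ → Euc 2} {a b : ℝ} (hab : a ≤ b)
    (hu : IsH1On u u' a b) (hgrid : ∀ t ∈ Icc a b, sinGrid (u t) = 0) :
    |u b 0 - u a 0| + |u b 1 - u a 1| ≤ ∫ t in a..b, ‖u' t‖ := by
  have hcoord (i : Fin 2) : IntervalIntegrable (fun t => u' t i) volume a b :=
    ⟨(EuclideanSpace.proj i : Euc 2 →L[ℝ] ℝ).integrable_comp hu.1.1,
      (EuclideanSpace.proj i : Euc 2 →L[ℝ] ℝ).integrable_comp hu.1.2⟩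
  have hdisp (i : Fin 2) : u b i - u a i = ∫ t in a..b, u' t i := by
    rw [hu.2.2 b ⟨hab, le_rfl⟩, PiLp.add_apply, add_sub_cancel_left]
    exact ((EuclideanSpace.proj i : Euc 2 →L[ℝ] ℝ).intervalIntegral_comp_comm hu.1).symm
  have hl1 : ∀ᵐ t ∂volume.restrict (Icc a b), |u' t 0| + |u' t 1| ≤ ‖u' t‖ := by
    rw [← Measure.restrict_congr_set Ioo_ae_eq_Icc, ae_restrict_iff' measurableSet_Ioo]
    filter_upwards [hu.ae_apply_eq_zero_of_sin_eq_zero hab 0,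
      hu.ae_apply_eq_zero_of_sin_eq_zero hab 1] with t h0 h1 ht
    refine abs_add_abs_le_norm_of_or ?_
    rcases mul_eq_zero.1 (hgrid t (Ioo_subset_Icc_self ht)) with h | h
    exacts [Or.inl (h0 ht h), Or.inr (h1 ht h)]
  calc |u b 0 - u a 0| + |u b 1 - u a 1|
      ≤ (∫ t in a..b, |u' t 0|) + ∫ t in a..b, |u' t 1| := by
        rw [hdisp, hdisp]
        exact add_le_add (abs_integral_le_integral_abs hab) (abs_integral_le_integral_abs hab)
    _ = ∫ t in a..b, (|u' t 0| + |u' t 1|) := (integral_add (hcoord 0).abs (hcoord 1).abs).symm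
    _ ≤ ∫ t in a..b, ‖u' t‖ :=
        integral_mono_ae_restrict hab ((hcoord 0).abs.add (hcoord 1).abs) hu.1.norm hl1

theorem mul_abs_sub_le_abs_sub {n : ℕ} {p q w : Euc n} {T r : ℝ} (hT : 0 ≤ T) (hp : ‖p‖ ≤ r)
    (hq : ‖q - T • w‖ ≤ r) (i : Fin n) : T * |w i| - 2 * r ≤ |q i - p i| := by
  have hpi : |p i| ≤ r := (PiLp.norm_apply_le p i).trans hp
  have hqi : |q i - T * w i| ≤ r := by simpa using (PiLp.norm_apply_le (q - T • w) i).trans hq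
  have := abs_add_three (T * w i - q i) (q i - p i) (p i)
  rw [show T * w i - q i + (q i - p i) + p i = T * w i by ring, abs_mul, abs_of_nonneg hT,
    abs_sub_comm] at this
  linarith

theorem ofReal_le_psiT_sinGrid {T : ℝ} (hT : 0 < T) (w : Euc 2) :
    ENNReal.ofReal (max (|w 0| + |w 1| - 4 * √2 * T⁻¹) 0 ^ 2) ≤ psiT sinGrid 0 T w := by
  refine ofReal_le_psiT hT fun u u' hu hgrid h0 hT' => ?_
  set m := max (|w 0| + |w 1| - 4 * √2 * T⁻¹) 0
  have hlen := hu.abs_sub_add_abs_sub_le_integral_norm hT.le hgrid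
  have hCS := sq_intervalIntegral_le_mul_integral_sq hT.le hu.1.norm hu.2.1
  have hdisp : T * m ≤ |u T 0 - u 0 0| + |u T 1 - u 0 1| := by
    rw [mul_max_of_nonneg _ _ hT.le, mul_zero]
    refine max_le ?_ (by positivity)
    have h0' := mul_abs_sub_le_abs_sub hT.le h0 hT' 0
    have h1' := mul_abs_sub_le_abs_sub hT.le h0 hT' 1
    rw [Nat.cast_ofNat] at h0' h1'
    calc T * (|w 0| + |w 1| - 4 * √2 * T⁻¹) = T * |w 0| - 2 * √2 + (T * |w 1| - 2 * √2) := by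
          field_simp; ring
      _ ≤ _ := add_le_add h0' h1'
  have hm : 0 ≤ T * m := by positivity
  have : T * (T * m ^ 2) ≤ T * ∫ t in (0 : ℝ)..T, ‖u' t‖ ^ 2 := by
    rw [sub_zero] at hCS
    nlinarith
  exact le_of_mul_le_mul_left this hT

theorem exists_mem_Icc_mul_add_div_eq {T x y : ℝ} (hT : 0 < T) (hx : 0 ≤ x) (hy : 0 ≤ y) :
    ∃ τ ∈ Icc 0 T, τ * ((x + y) / T) = x ∧ (T - τ) * ((x + y) / T) = y := by
  rcases eq_or_lt_of_le (add_nonneg hx hy) with hxy | hxy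
  · obtain ⟨rfl, rfl⟩ : x = 0 ∧ y = 0 := ⟨by linarith, by linarith⟩
    exact ⟨0, ⟨le_rfl, hT.le⟩, by simp, by simp⟩
  · refine ⟨T * x / (x + y), ⟨by positivity, div_le_of_le_mul₀ hxy.le hT.le (by nlinarith)⟩,
      by field_simp, by field_simp; ring⟩

theorem exists_sinGrid_path {T a b : ℝ} (hT : 0 < T) (ha : sin (2 * π * a) = 0) :
    ∃ u u' : ℝ → Euc 2, IsH1On u u' 0 T ∧ (∀ t ∈ Icc 0 T, sinGrid (u t) = 0) ∧ u 0 = 0 ∧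
      u T 0 = a ∧ u T 1 = b ∧ ∫ t in (0 : ℝ)..T, ‖u' t‖ ^ 2 ≤ T * ((|a| + |b|) / T) ^ 2 := by
  set v := (|a| + |b|) / T
  obtain ⟨τ, ⟨hτ0, hτT⟩, hτa, hτb⟩ := exists_mem_Icc_mul_add_div_eq hT (abs_nonneg a) (abs_nonneg b)
  set C₁ : Euc 2 := EuclideanSpace.single 0 (SignType.sign a * v)
  set C₂ : Euc 2 := EuclideanSpace.single 1 (SignType.sign b * v)
  have hspeed (i : Fin 2) (x : ℝ) :
      ‖(EuclideanSpace.single i (SignType.sign x * v) : Euc 2)‖ ^ 2 ≤ v ^ 2 := by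
    rcases lt_trichotomy x 0 with h | h | h <;> simp [h, sq_nonneg]
  have hcorner₁ : τ * (SignType.sign a * v) = a := by rw [mul_left_comm, hτa, sign_mul_abs]
  have hcorner₂ : (T - τ) * (SignType.sign b * v) = b := by rw [mul_left_comm, hτb, sign_mul_abs]
  have hcoord (t : ℝ) : twoLegPath τ C₁ C₂ t 0 = min t τ * (SignType.sign a * v) ∧
      twoLegPath τ C₁ C₂ t 1 = (t - min t τ) * (SignType.sign b * v) := by
    simp [twoLegPath, C₁, C₂]
  refine ⟨twoLegPath τ C₁ C₂, fun t => if t < τ then C₁ else C₂,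
    ⟨intervalIntegrable_ite_lt _ _ _ _ _,
      by simpa [apply_ite] using intervalIntegrable_ite_lt τ (‖C₁‖ ^ 2) (‖C₂‖ ^ 2) 0 T,
      fun t ht => by rw [integral_ite_lt τ C₁ C₂ ht.1]; abel⟩, ?_, ?_, ?_, ?_, ?_⟩
  · intro t ht
    rcases min_choice t τ with h | h
    · simp [sinGrid, (hcoord t).2, h]
    · simp [sinGrid, (hcoord t).1, h, hcorner₁, ha]
  · simp [twoLegPath, hτ0]
  · simp [(hcoord T).1, min_eq_right hτT, hcorner₁]
  · simp [(hcoord T).2, min_eq_right hτT, hcorner₂]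
  · simp only [apply_ite (‖·‖ ^ 2)]
    rw [integral_ite_lt τ (‖C₁‖ ^ 2) (‖C₂‖ ^ 2) hT.le]
    simp only [twoLegPath, min_eq_right hτT, min_eq_left hτ0, smul_eq_mul]
    nlinarith [mul_le_mul_of_nonneg_left (hspeed 0 a) hτ0,
      mul_le_mul_of_nonneg_left (hspeed 1 b) (sub_nonneg.2 hτT)]

theorem psiT_sinGrid_le_ofReal {T : ℝ} (hT : 0 < T) (w : Euc 2) :
    psiT sinGrid 0 T w ≤ ENNReal.ofReal ((|w 0| + |w 1| + T⁻¹ / 4) ^ 2) := by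
  set a : ℝ := round (2 * (T * w 0)) / 2
  have ha : sin (2 * π * a) = 0 := by
    rw [show 2 * π * a = (round (2 * (T * w 0)) : ℤ) * π by simp only [a]; ring]
    exact sin_int_mul_pi _
  have haw : |a - T * w 0| ≤ 1 / 4 := by
    have := abs_sub_round (2 * (T * w 0))
    rw [abs_sub_comm] at this
    rw [show a - T * w 0 = (round (2 * (T * w 0)) - 2 * (T * w 0)) / 2 by simp only [a]; ring,
      abs_div, abs_two]
    linarith
  obtain ⟨u, u', hu, hgrid, h0, hT0, hT1, henergy⟩ := exists_sinGrid_path (b := T * w 1) hT ha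
  refine (psiT_le_ofReal hT hu hgrid (by simp [h0]) ?_ henergy).trans
    (ENNReal.ofReal_le_ofReal (pow_le_pow_left₀ (by positivity) ?_ 2))
  · have hend : ‖u T - T • w‖ = |a - T * w 0| := by
      rw [EuclideanSpace.norm_eq, Fin.sum_univ_two]
      simp [hT0, hT1, sqrt_sq_eq_abs]
    rw [hend, Nat.cast_ofNat]
    exact haw.trans ((le_sqrt (by norm_num) (by norm_num)).2 (by norm_num))
  · have hat : |a| ≤ T * |w 0| + 1 / 4 := by
      have := abs_sub_abs_le_abs_sub a (T * w 0)
      rw [abs_mul, abs_of_pos hT] at this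
      linarith
    have hrhs : (|w 0| + |w 1| + T⁻¹ / 4) * T = T * |w 0| + 1 / 4 + T * |w 1| := by
      field_simp
      ring
    rw [div_le_iff₀ hT, abs_mul, abs_of_pos hT, hrhs]
    linarith

/-- Example 5.1: for `φ(x,y) = sin(2πx)·sin(2πy)` the homogenized density on the
level `z = 0` is the squared `ℓ¹` norm. -/
theorem psiT_limit_sin_grid (w : Euc 2) :
    Tendsto
      (fun T : ℝ => psiT
        (fun p : Euc 2 => Real.sin (2 * Real.pi * p 0) * Real.sin (2 * Real.pi * p 1))
        (0 : ℝ) T w)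
      atTop (𝓝 (ENNReal.ofReal ((|w 0| + |w 1|) ^ 2))) := by
  set N := |w 0| + |w 1|
  have hlim {f : ℝ → ℝ} (hf : Continuous f) (hf0 : f 0 = N ^ 2) :
      Tendsto (fun T : ℝ => ENNReal.ofReal (f T⁻¹)) atTop (𝓝 (ENNReal.ofReal (N ^ 2))) :=
    hf0 ▸ ((ENNReal.continuous_ofReal.comp hf).tendsto 0).comp tendsto_inv_atTop_zero
  refine tendsto_of_tendsto_of_tendsto_of_le_of_le'
    (hlim (f := fun x => max (N - 4 * √2 * x) 0 ^ 2) (by fun_prop)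
      (by simp [show 0 ≤ N by positivity]))
    (hlim (f := fun x => (N + x / 4) ^ 2) (by fun_prop) (by simp)) ?_ ?_
  · filter_upwards [eventually_gt_atTop 0] with T hT using ofReal_le_psiT_sinGrid hT w
  · filter_upwards [eventually_gt_atTop 0] with T hT using psiT_sinGrid_le_ofReal hT w
end
end

section
/- Let φ: ℝ³ → ℝ be given by φ(p) = dist²(p, ℤ³), the squared Euclidean distance from p to the integer lattice in ℝ³. Then for every w = (w₁,w₂,w₃) ∈ ℝ³, limsup_{T→∞} ψ_T^{1/4}(w) ≤ (π/2)²·(max(μ, |w₁| + |w₂| + |w₃| − μ))², where μ = min(|w₁|,|w₂|,|w₃|). -/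
/-!
The level set `{φ = 1/4}` is the union of the spheres of radius `1/2` about the lattice points;
neighbouring spheres touch at the midpoints of lattice edges. A quarter of a great circle has
length `π/4`, and two of them move the current touching point either diagonally by `e + d` (one
quarter circle on each of two neighbouring spheres) or straight by `e` (half a great circle of one
sphere). With signed coordinate vectors `eᵢ` and `|w₀| ≤ |w₁|`, about `|w₀| T` diagonal steps by
`e₀ + e₁`, followed by steps by `e₁` and then by `e₂`, end within `√3` of `T w` after
`2 (|w₁| + |w₂|) T + O(1)` quarter circles. Run at constant speed over `[0, T]`, this curve gives
`ψ_T ≤ (length / T)² = ((π/2) (|w₁| + |w₂|) + O(1/T))²`; taking `|w₀| = μ` the smallest coordinate,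
`|w₁| + |w₂| = Σ|wᵢ| - μ = max(μ, Σ|wᵢ| - μ)`.
-/

open MeasureTheory Filter
open scoped ENNReal Topology

noncomputable section

open Real Set intervalIntegral
open scoped RealInnerProductSpace

lemma Metric.infDist_eq_dist_of_pairwise_le_dist {X : Type*} [PseudoMetricSpace X] {S : Set X}
    {ρ : ℝ} (hS : S.Pairwise fun x y => 2 * ρ ≤ dist x y) {c x : X} (hc : c ∈ S)
    (hx : dist x c ≤ ρ) : Metric.infDist x S = dist x c := by
  refine (Metric.infDist_le_dist_of_mem hc).antisymm ?_
  rw [Metric.infDist_eq_iInf]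
  have : Nonempty S := ⟨⟨c, hc⟩⟩
  refine le_ciInf fun ⟨y, hy⟩ => ?_
  rcases eq_or_ne c y with rfl | hcy
  · exact le_rfl
  · linarith [hS hc hy hcy, dist_triangle c x y, dist_comm x c]

def intLattice (n : ℕ) : AddSubgroup (Euc n) where
  carrier := {q | ∀ i, ∃ k : ℤ, q i = k}
  add_mem' {x y} hx hy i := by
    obtain ⟨k, hk⟩ := hx i
    obtain ⟨l, hl⟩ := hy i
    exact ⟨k + l, by simp [hk, hl]⟩
  zero_mem' i := ⟨0, by simp⟩
  neg_mem' {x} hx i := by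
    obtain ⟨k, hk⟩ := hx i
    exact ⟨-k, by simp [hk]⟩

lemma one_le_dist_of_mem_intLattice {n : ℕ} {x y : Euc n} (hx : x ∈ intLattice n)
    (hy : y ∈ intLattice n) (hxy : x ≠ y) : 1 ≤ dist x y := by
  obtain ⟨i, hi⟩ : ∃ i, x i ≠ y i := by
    by_contra! h
    exact hxy (PiLp.ext h)
  obtain ⟨k, hk⟩ := hx i
  obtain ⟨l, hl⟩ := hy i
  have hkl : k ≠ l := by rintro rfl; exact hi (hk.trans hl.symm)
  calc (1 : ℝ) ≤ |((k - l : ℤ) : ℝ)| := by exact_mod_cast Int.one_le_abs (sub_ne_zero.2 hkl)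
    _ = dist (x i) (y i) := by rw [Real.dist_eq, hk, hl]; push_cast; rfl
    _ ≤ dist x y := PiLp.dist_apply_le x y i

lemma infDist_intLattice_of_mem_sphere {n : ℕ} {c p : Euc n} (hc : c ∈ intLattice n)
    (hp : p ∈ Metric.sphere c (1 / 2)) : Metric.infDist p (intLattice n) = 1 / 2 := by
  rw [Metric.mem_sphere] at hp
  rw [← hp]
  refine Metric.infDist_eq_dist_of_pairwise_le_dist (ρ := 1 / 2) (fun x hx y hy hxy => ?_) hc hp.le
  linarith [one_le_dist_of_mem_intLattice hx hy hxy]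

lemma Nat.floor_div_eq_of_mem_Ico {τ : ℝ} (hτ : 0 < τ) {k : ℕ} {t : ℝ}
    (ht : t ∈ Ico (k * τ) ((k + 1) * τ)) : ⌊t / τ⌋₊ = k := by
  rw [Nat.floor_eq_iff (div_nonneg ((by positivity : (0:ℝ) ≤ k * τ).trans ht.1) hτ.le),
    le_div_iff₀ hτ, div_lt_iff₀ hτ]
  exact ht

/-- The arc `θ ↦ centre + cos θ • src + sin θ • tgt`, `0 ≤ θ ≤ π / 2`, from `start` to `finish`. -/
structure QuarterArc (E : Type*) where
  centre : E
  src : E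
  tgt : E

namespace QuarterArc

section Concatenation

variable {E : Type*} [AddCommGroup E]

def start (a : QuarterArc E) : E := a.centre + a.src

def finish (a : QuarterArc E) : E := a.centre + a.tgt

def translate (a : QuarterArc E) (g : E) : QuarterArc E := ⟨g + a.centre, a.src, a.tgt⟩

@[simp] lemma start_translate (a : QuarterArc E) (g : E) :
    (a.translate g).start = g + a.start := by
  simp [translate, start, add_assoc]

@[simp] lemma finish_translate (a : QuarterArc E) (g : E) :
    (a.translate g).finish = g + a.finish := by
  simp [translate, finish, add_assoc]

def IsChain (a : ℕ → QuarterArc E) : Prop := ∀ k, (a k).finish = (a (k + 1)).start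

structure Move (E : Type*) where
  fst : QuarterArc E
  snd : QuarterArc E
  shift : E

/-- Each move enters at `s` and leaves at `shift + s`, so that after translating move `j` by the
sum of the earlier shifts, consecutive moves join up. -/
def Move.IsValid (s : E) (m : Move E) : Prop :=
  m.fst.start = s ∧ m.fst.finish = m.snd.start ∧ m.snd.finish = m.shift + s

def movePath (m : ℕ → Move E) (k : ℕ) : QuarterArc E :=
  (if Even k then (m (k / 2)).fst else (m (k / 2)).snd).translate
    (∑ i ∈ Finset.range (k / 2), (m i).shift)

variable {m : ℕ → Move E}

lemma movePath_two_mul (j : ℕ) :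
    movePath m (2 * j) = (m j).fst.translate (∑ i ∈ Finset.range j, (m i).shift) := by
  simp [movePath]

lemma movePath_two_mul_add_one (j : ℕ) :
    movePath m (2 * j + 1) = (m j).snd.translate (∑ i ∈ Finset.range j, (m i).shift) := by
  have : (2 * j + 1) / 2 = j := by omega
  simp [movePath, this]

lemma isChain_movePath {s : E} (hm : ∀ j, (m j).IsValid s) : IsChain (movePath m) := by
  intro k
  obtain ⟨j, rfl | rfl⟩ := Nat.even_or_odd' k
  · rw [movePath_two_mul, movePath_two_mul_add_one, finish_translate, start_translate,
      (hm j).2.1]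
  · rw [show 2 * j + 1 + 1 = 2 * (j + 1) by ring, movePath_two_mul, movePath_two_mul_add_one,
      finish_translate, start_translate, (hm j).2.2, (hm (j + 1)).1, Finset.sum_range_succ]
    abel

lemma start_movePath_two_mul {s : E} (hm : ∀ j, (m j).IsValid s) (j : ℕ) :
    (movePath m (2 * j)).start = (∑ i ∈ Finset.range j, (m i).shift) + s := by
  rw [movePath_two_mul, start_translate, (hm j).1]

lemma centre_movePath_mem (L : AddSubgroup E)
    (hm : ∀ j, (m j).fst.centre ∈ L ∧ (m j).snd.centre ∈ L ∧ (m j).shift ∈ L) (k : ℕ) :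
    (movePath m k).centre ∈ L := by
  have hsum (j : ℕ) : ∑ i ∈ Finset.range j, (m i).shift ∈ L :=
    L.sum_mem fun i _ => (hm i).2.2
  obtain ⟨j, rfl | rfl⟩ := Nat.even_or_odd' k
  · rw [movePath_two_mul]; exact L.add_mem (hsum j) (hm j).1
  · rw [movePath_two_mul_add_one]; exact L.add_mem (hsum j) (hm j).2.1

variable [Module ℝ E]

namespace Move

/-- Around the sphere at `0` to the touching point `(1 / 2) • d`, then around the sphere at `d`. -/
def turn (e d f : E) : Move E :=
  ⟨⟨0, -(1 / 2 : ℝ) • e, (1 / 2 : ℝ) • d⟩, ⟨d, -(1 / 2 : ℝ) • d, (1 / 2 : ℝ) • f⟩,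
    d + (1 / 2 : ℝ) • (e + f)⟩

/-- Half a great circle of the sphere at `0`, through `(1 / 2) • d`. -/
def straight (e d : E) : Move E :=
  ⟨⟨0, -(1 / 2 : ℝ) • e, (1 / 2 : ℝ) • d⟩, ⟨0, (1 / 2 : ℝ) • d, (1 / 2 : ℝ) • e⟩, e⟩

lemma isValid_turn (e d f : E) : (turn e d f).IsValid (-(1 / 2 : ℝ) • e) := by
  refine ⟨?_, ?_, ?_⟩ <;> simp only [turn, start, finish] <;> module

lemma isValid_straight (e d : E) : (straight e d).IsValid (-(1 / 2 : ℝ) • e) := by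
  refine ⟨?_, ?_, ?_⟩ <;> simp only [straight, start, finish] <;> module

end Move

end Concatenation

variable {E : Type*} [NormedAddCommGroup E] [InnerProductSpace ℝ E]

def point (a : QuarterArc E) (θ : ℝ) : E := a.centre + (cos θ • a.src + sin θ • a.tgt)

def velocity (a : QuarterArc E) (θ : ℝ) : E := -sin θ • a.src + cos θ • a.tgt

def IsRound (r : ℝ) (a : QuarterArc E) : Prop :=
  ‖a.src‖ = r ∧ ‖a.tgt‖ = r ∧ ⟪a.src, a.tgt⟫ = 0

@[simp] lemma point_zero (a : QuarterArc E) : a.point 0 = a.start := by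
  simp [point, start]

@[simp] lemma point_pi_div_two (a : QuarterArc E) : a.point (π / 2) = a.finish := by
  simp [point, finish]

lemma hasDerivAt_point (a : QuarterArc E) (θ : ℝ) : HasDerivAt a.point (a.velocity θ) θ := by
  have h := ((hasDerivAt_cos θ).smul_const a.src).add ((hasDerivAt_sin θ).smul_const a.tgt)
  exact (h.const_add a.centre).congr_deriv (by simp [velocity, neg_smul])

lemma norm_cos_smul_add_sin_smul {r : ℝ} {p q : E} (hp : ‖p‖ = r) (hq : ‖q‖ = r)
    (hpq : ⟪p, q⟫ = 0) (θ : ℝ) : ‖cos θ • p + sin θ • q‖ = |r| := by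
  rw [← sqrt_sq_eq_abs, ← sqrt_sq (norm_nonneg _), norm_add_sq_real, real_inner_smul_left,
    real_inner_smul_right, hpq, norm_smul, norm_smul, hp, hq]
  congr 1
  simp only [Real.norm_eq_abs, mul_pow, sq_abs]
  linear_combination r ^ 2 * cos_sq_add_sin_sq θ

lemma IsRound.nonneg {r : ℝ} {a : QuarterArc E} (ha : a.IsRound r) : 0 ≤ r :=
  ha.1 ▸ norm_nonneg _

lemma IsRound.norm_point_sub_centre {r : ℝ} {a : QuarterArc E} (ha : a.IsRound r) (θ : ℝ) :
    ‖a.point θ - a.centre‖ = r := by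
  rw [point, add_sub_cancel_left, norm_cos_smul_add_sin_smul ha.1 ha.2.1 ha.2.2,
    abs_of_nonneg ha.nonneg]

lemma IsRound.norm_velocity {r : ℝ} {a : QuarterArc E} (ha : a.IsRound r) (θ : ℝ) :
    ‖a.velocity θ‖ = r := by
  have : a.velocity θ = cos (θ + π / 2) • a.src + sin (θ + π / 2) • a.tgt := by
    simp [velocity, cos_add_pi_div_two, sin_add_pi_div_two, neg_smul]
  rw [this, norm_cos_smul_add_sin_smul ha.1 ha.2.1 ha.2.2, abs_of_nonneg ha.nonneg]

lemma IsRound.translate {r : ℝ} {a : QuarterArc E} (ha : a.IsRound r) (g : E) :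
    (a.translate g).IsRound r := ha

lemma isRound_mk_smul {p q : E} (hp : ‖p‖ = 1) (hq : ‖q‖ = 1) (hpq : ⟪p, q⟫ = 0) (c : E)
    {r s t : ℝ} (hs : |s| = r) (ht : |t| = r) : IsRound r ⟨c, s • p, t • q⟩ := by
  refine ⟨?_, ?_, ?_⟩
  · simp [norm_smul, hp, hs]
  · simp [norm_smul, hq, ht]
  · simp [real_inner_smul_left, real_inner_smul_right, hpq]

namespace Move

lemma isRound_turn {e d f : E} (he : ‖e‖ = 1) (hd : ‖d‖ = 1) (hf : ‖f‖ = 1) (hed : ⟪e, d⟫ = 0)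
    (hdf : ⟪d, f⟫ = 0) : (turn e d f).fst.IsRound (1 / 2) ∧ (turn e d f).snd.IsRound (1 / 2) :=
  ⟨isRound_mk_smul he hd hed 0 (by norm_num) (by norm_num),
    isRound_mk_smul hd hf hdf d (by norm_num) (by norm_num)⟩

lemma isRound_straight {e d : E} (he : ‖e‖ = 1) (hd : ‖d‖ = 1) (hed : ⟪e, d⟫ = 0) :
    (straight e d).fst.IsRound (1 / 2) ∧ (straight e d).snd.IsRound (1 / 2) :=
  ⟨isRound_mk_smul he hd hed 0 (by norm_num) (by norm_num),
    isRound_mk_smul hd he (by rwa [real_inner_comm]) 0 (by norm_num) (by norm_num)⟩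

end Move

section Moves

variable {m : ℕ → Move E}

lemma isRound_movePath {r : ℝ} (hm : ∀ j, (m j).fst.IsRound r ∧ (m j).snd.IsRound r) (k : ℕ) :
    (movePath m k).IsRound r := by
  obtain ⟨j, rfl | rfl⟩ := Nat.even_or_odd' k
  · rw [movePath_two_mul]; exact (hm j).1.translate _
  · rw [movePath_two_mul_add_one]; exact (hm j).2.translate _

end Moves

/-- Arc `k` is traversed at constant speed during `[k * τ, (k + 1) * τ]`. -/
def chainPath (a : ℕ → QuarterArc E) (τ t : ℝ) : E :=
  (a ⌊t / τ⌋₊).point (π / 2 * (t / τ - ⌊t / τ⌋₊))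

def chainVelocity (a : ℕ → QuarterArc E) (τ t : ℝ) : E :=
  (π / (2 * τ)) • (a ⌊t / τ⌋₊).velocity (π / 2 * (t / τ - ⌊t / τ⌋₊))

variable {a : ℕ → QuarterArc E} {τ r : ℝ}

lemma chainPath_eq_point (ha : IsChain a) (hτ : 0 < τ) {k : ℕ} {t : ℝ}
    (ht : t ∈ Icc (k * τ) ((k + 1) * τ)) :
    chainPath a τ t = (a k).point (π / 2 * (t / τ - k)) := by
  rcases eq_or_lt_of_le ht.2 with rfl | hlt
  · have hfl : ⌊((k:ℝ) + 1) * τ / τ⌋₊ = k + 1 := by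
      rw [mul_div_cancel_right₀ _ hτ.ne']; exact_mod_cast Nat.floor_natCast (k + 1)
    rw [chainPath, hfl, mul_div_cancel_right₀ _ hτ.ne']
    simp [← ha k]
  · rw [chainPath, Nat.floor_div_eq_of_mem_Ico hτ ⟨ht.1, hlt⟩]

lemma hasDerivAt_point_rescaled (b : QuarterArc E) (k : ℕ) (t : ℝ) :
    HasDerivAt (fun s => b.point (π / 2 * (s / τ - k)))
      ((π / (2 * τ)) • b.velocity (π / 2 * (t / τ - k))) t := by
  have hθ : HasDerivAt (fun s => π / 2 * (s / τ - k)) (π / (2 * τ)) t :=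
    ((((hasDerivAt_id t).div_const τ).sub_const (k : ℝ)).const_mul (π / 2)).congr_deriv
      (by ring)
  exact (b.hasDerivAt_point _).scomp t hθ

lemma hasDerivAt_chainPath (ha : IsChain a) (hτ : 0 < τ) {k : ℕ} {t : ℝ}
    (ht : t ∈ Ioo (k * τ) ((k + 1) * τ)) :
    HasDerivAt (chainPath a τ) (chainVelocity a τ t) t := by
  have heq : chainPath a τ =ᶠ[nhds t] fun s => (a k).point (π / 2 * (s / τ - k)) :=
    Filter.eventually_of_mem (Icc_mem_nhds ht.1 ht.2) fun s hs => chainPath_eq_point ha hτ hs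
  rw [chainVelocity, Nat.floor_div_eq_of_mem_Ico hτ (Ioo_subset_Ico_self ht)]
  exact (hasDerivAt_point_rescaled (a k) k t).congr_of_eventuallyEq heq

lemma norm_chainVelocity (hr : ∀ k, (a k).IsRound r) (hτ : 0 < τ) (t : ℝ) :
    ‖chainVelocity a τ t‖ = π * r / (2 * τ) := by
  rw [chainVelocity, norm_smul, (hr _).norm_velocity, Real.norm_of_nonneg (by positivity)]
  ring

lemma intervalIntegrable_chainVelocity (hr : ∀ k, (a k).IsRound r) (hτ : 0 < τ)
    (t₀ t₁ : ℝ) : IntervalIntegrable (chainVelocity a τ) volume t₀ t₁ := by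
  have hk : Measurable fun t : ℝ => ⌊t / τ⌋₊ := Nat.measurable_floor.comp (by fun_prop)
  have hθ : Measurable fun t : ℝ => π / 2 * (t / τ - ⌊t / τ⌋₊) :=
    measurable_const.mul ((measurable_id.div_const τ).sub (measurable_from_top.comp hk))
  have hmeas : StronglyMeasurable (chainVelocity a τ) := by
    have hsrc := (StronglyMeasurable.of_discrete (f := fun k => (a k).src)).comp_measurable hk
    have htgt := (StronglyMeasurable.of_discrete (f := fun k => (a k).tgt)).comp_measurable hk
    exact stronglyMeasurable_const.smul
      ((hθ.sin.neg.stronglyMeasurable.smul hsrc).add (hθ.cos.stronglyMeasurable.smul htgt))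
  rw [intervalIntegrable_iff]
  exact (integrableOn_const measure_Ioc_lt_top.ne).mono'
    hmeas.aestronglyMeasurable (Filter.Eventually.of_forall fun t =>
      (norm_chainVelocity hr hτ t).le)

lemma chainPath_natCast_mul (hτ : 0 < τ) (k : ℕ) : chainPath a τ (k * τ) = (a k).start := by
  simp [chainPath, mul_div_cancel_right₀ _ hτ.ne']

lemma chainPath_mem_sphere (hr : ∀ k, (a k).IsRound r) (t : ℝ) :
    ∃ k, chainPath a τ t ∈ Metric.sphere (a k).centre r :=
  ⟨_, by rw [mem_sphere_iff_norm]; exact (hr _).norm_point_sub_centre _⟩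

variable [CompleteSpace E]

lemma integral_chainVelocity_of_mem_Icc (ha : IsChain a) (hr : ∀ k, (a k).IsRound r)
    (hτ : 0 < τ) {k : ℕ} {t : ℝ} (ht : t ∈ Icc (k * τ) ((k + 1) * τ)) :
    ∫ s in (k * τ)..t, chainVelocity a τ s = chainPath a τ t - chainPath a τ (k * τ) := by
  refine integral_eq_sub_of_hasDerivAt_of_le ht.1 ?_ ?_
    (intervalIntegrable_chainVelocity hr hτ _ _)
  · have hsub : Icc ((k:ℝ) * τ) t ⊆ Icc (k * τ) ((k + 1) * τ) := Icc_subset_Icc_right ht.2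
    have hcont : Continuous fun s => (a k).point (π / 2 * (s / τ - k)) :=
      continuous_iff_continuousAt.2 fun s => (hasDerivAt_point_rescaled (a k) k s).continuousAt
    exact hcont.continuousOn.congr fun s hs => chainPath_eq_point ha hτ (hsub hs)
  · exact fun s hs => hasDerivAt_chainPath ha hτ ⟨hs.1, hs.2.trans_le ht.2⟩

lemma integral_chainVelocity_natCast_mul (ha : IsChain a) (hr : ∀ k, (a k).IsRound r)
    (hτ : 0 < τ) (k : ℕ) :
    ∫ s in (0 : ℝ)..(k * τ), chainVelocity a τ s = chainPath a τ (k * τ) - chainPath a τ 0 := by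
  induction k with
  | zero => simp
  | succ k ih =>
    have hstep := integral_chainVelocity_of_mem_Icc ha hr hτ (k := k)
      (t := (k + 1) * τ) ⟨by nlinarith, le_rfl⟩
    push_cast
    rw [← integral_add_adjacent_intervals (intervalIntegrable_chainVelocity hr hτ _ _)
      (intervalIntegrable_chainVelocity hr hτ _ ((k + 1) * τ)), ih, hstep]
    abel

lemma integral_chainVelocity (ha : IsChain a) (hr : ∀ k, (a k).IsRound r)
    (hτ : 0 < τ) {t : ℝ} (ht : 0 ≤ t) :
    ∫ s in (0 : ℝ)..t, chainVelocity a τ s = chainPath a τ t - chainPath a τ 0 := by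
  set k := ⌊t / τ⌋₊
  have hk : t ∈ Icc (k * τ) ((k + 1) * τ) :=
    ⟨(le_div_iff₀ hτ).1 (Nat.floor_le (div_nonneg ht hτ.le)),
      ((div_lt_iff₀ hτ).1 (Nat.lt_floor_add_one _)).le⟩
  rw [← integral_add_adjacent_intervals (intervalIntegrable_chainVelocity hr hτ _ _)
    (intervalIntegrable_chainVelocity hr hτ (k * τ) t),
    integral_chainVelocity_natCast_mul ha hr hτ,
    integral_chainVelocity_of_mem_Icc ha hr hτ hk]
  abel

end QuarterArc

section Staircase

open QuarterArc

variable {E : Type*} [NormedAddCommGroup E] [InnerProductSpace ℝ E]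

lemma Orthonormal.norm_sum_smul_sq {ι : Type*} [Fintype ι] {v : ι → E} (hv : Orthonormal ℝ v)
    (c : ι → ℝ) : ‖∑ i, c i • v i‖ ^ 2 = ∑ i, c i ^ 2 := by
  rw [← real_inner_self_eq_norm_sq, hv.inner_sum]
  simp [sq]

/-- `M` diagonal steps by `v 0 + v 1`, then `D` straight steps by `v 1`, then steps by `v 2`;
every move starts at the point `-(1 / 2) • v 1` of its first sphere. -/
def staircase (v : Fin 3 → E) (M D j : ℕ) : Move E :=
  if j < M then .turn (v 1) (v 0) (v 1)
  else if j < M + D then .straight (v 1) (v 0)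
  else .turn (v 1) (v 2) (-v 1)

variable {v : Fin 3 → E} {M D : ℕ}

lemma isValid_staircase (j : ℕ) : (staircase v M D j).IsValid (-(1 / 2 : ℝ) • v 1) := by
  unfold staircase
  split_ifs
  · exact Move.isValid_turn _ _ _
  · exact Move.isValid_straight _ _
  · exact Move.isValid_turn _ _ _

lemma isRound_staircase (hv : Orthonormal ℝ v) (j : ℕ) :
    (staircase v M D j).fst.IsRound (1 / 2) ∧ (staircase v M D j).snd.IsRound (1 / 2) := by
  have h10 : ⟪v 1, v 0⟫ = 0 := hv.2 (by decide)
  have h01 : ⟪v 0, v 1⟫ = 0 := hv.2 (by decide)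
  have h12 : ⟪v 1, v 2⟫ = 0 := hv.2 (by decide)
  have h21 : ⟪v 2, -v 1⟫ = 0 := by rw [inner_neg_right, hv.2 (by decide), neg_zero]
  unfold staircase
  split_ifs
  · exact Move.isRound_turn (hv.norm_eq_one 1) (hv.norm_eq_one 0) (hv.norm_eq_one 1) h10 h01
  · exact Move.isRound_straight (hv.norm_eq_one 1) (hv.norm_eq_one 0) h10
  · exact Move.isRound_turn (hv.norm_eq_one 1) (hv.norm_eq_one 2)
      (by rw [norm_neg, hv.norm_eq_one 1]) h12 h21

lemma staircase_mem (L : AddSubgroup E) (hL : ∀ i, v i ∈ L) (j : ℕ) :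
    (staircase v M D j).fst.centre ∈ L ∧ (staircase v M D j).snd.centre ∈ L ∧
      (staircase v M D j).shift ∈ L := by
  unfold staircase
  split_ifs
  · refine ⟨L.zero_mem, hL 0, ?_⟩
    convert L.add_mem (hL 0) (hL 1) using 1
    simp only [Move.turn]
    module
  · exact ⟨L.zero_mem, L.zero_mem, hL 1⟩
  · refine ⟨L.zero_mem, hL 2, ?_⟩
    convert hL 2 using 1
    simp only [Move.turn]
    module

lemma sum_shift_staircase (K : ℕ) :
    ∑ j ∈ Finset.range (M + D + K), (staircase v M D j).shift
      = (M : ℝ) • (v 0 + v 1) + (D : ℝ) • v 1 + (K : ℝ) • v 2 := by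
  have h₁ : ∀ j ∈ Finset.range M, (staircase v M D j).shift = v 0 + v 1 := fun j hj => by
    simp only [staircase, Finset.mem_range.1 hj, if_true, Move.turn]
    module
  have h₂ : ∀ j ∈ Finset.range D, (staircase v M D (M + j)).shift = v 1 := fun j hj => by
    simp [staircase, Finset.mem_range.1 hj, Move.straight]
  have h₃ : ∀ j ∈ Finset.range K, (staircase v M D (M + D + j)).shift = v 2 := fun j _ => by
    simp only [staircase, show ¬M + D + j < M by omega, show ¬M + D + j < M + D by omega,
      if_false, Move.turn]
    module
  rw [Finset.sum_range_add, Finset.sum_range_add, Finset.sum_congr rfl h₁,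
    Finset.sum_congr rfl h₂, Finset.sum_congr rfl h₃]
  simp [← Nat.cast_smul_eq_nsmul ℝ]

lemma start_staircase_zero : (movePath (staircase v M D) 0).start = -(1 / 2 : ℝ) • v 1 := by
  simpa using start_movePath_two_mul isValid_staircase 0

lemma norm_sq_start_staircase_sub (hv : Orthonormal ℝ v) {R : ℕ} (hMR : M ≤ R) (K : ℕ)
    (b : Fin 3 → ℝ) :
    ‖(movePath (staircase v M (R - M)) (2 * (R + K))).start - ∑ i, b i • v i‖ ^ 2
      = (M - b 0) ^ 2 + (R - 1 / 2 - b 1) ^ 2 + (K - b 2) ^ 2 := by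
  have hend : (movePath (staircase v M (R - M)) (2 * (R + K))).start - ∑ i, b i • v i
      = ∑ i, ![M - b 0, R - 1 / 2 - b 1, K - b 2] i • v i := by
    rw [start_movePath_two_mul isValid_staircase, show R + K = M + (R - M) + K by omega,
      sum_shift_staircase, Nat.cast_sub hMR]
    simp only [Fin.sum_univ_three, Matrix.cons_val_zero, Matrix.cons_val_one, Matrix.cons_val_two,
      Matrix.head_cons, Matrix.tail_cons]
    module
  rw [hend, hv.norm_sum_smul_sq, Fin.sum_univ_three]
  rfl

end Staircase

lemma psiT_le_of_isH1On {n : ℕ} {α : Type*} {φ : Euc n → α} {z : α} {T : ℝ} (hT : 0 < T)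
    {w : Euc n} {u u' : ℝ → Euc n} (hu : IsH1On u u' 0 T)
    (hφ : ∀ t ∈ Icc (0 : ℝ) T, φ (u t) = z) (h0 : ‖u 0‖ ≤ √n) (h1 : ‖u T - T • w‖ ≤ √n)
    {v : ℝ} (hv : ∀ t, ‖u' t‖ = v) :
    psiT φ z T w ≤ ENNReal.ofReal (v ^ 2) := by
  have henergy : ∫ t in (0 : ℝ)..T, ‖u' t‖ ^ 2 = T * v ^ 2 := by simp [hv]
  calc psiT φ z T w ≤ ENNReal.ofReal (1 / T) * ENNReal.ofReal (T * v ^ 2) := by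
        refine mul_le_mul_right (sInf_le ?_) _
        exact ⟨u, u', hu, hφ, h0, h1, by rw [henergy]⟩
    _ = ENNReal.ofReal (v ^ 2) := by
        rw [← ENNReal.ofReal_mul (by positivity)]
        congr 1
        field_simp

open QuarterArc in
theorem psiT_le_of_isChain {n : ℕ} {α : Type*} {φ : Euc n → α} {z : α} {T : ℝ} (hT : 0 < T)
    {w : Euc n} {a : ℕ → QuarterArc (Euc n)} {r : ℝ} (ha : IsChain a)
    (hr : ∀ k, (a k).IsRound r) (hφ : ∀ k, ∀ p ∈ Metric.sphere (a k).centre r, φ p = z)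
    {N : ℕ} (hN : 0 < N) (h0 : ‖(a 0).start‖ ≤ √n) (h1 : ‖(a N).start - T • w‖ ≤ √n) :
    psiT φ z T w ≤ ENNReal.ofReal ((N * π * r / (2 * T)) ^ 2) := by
  have hτ : 0 < T / N := by positivity
  have hTN : (N : ℝ) * (T / N) = T := by field_simp
  have hu0 : chainPath a (T / N) 0 = (a 0).start := by
    simpa using chainPath_natCast_mul (a := a) hτ 0
  have huT : chainPath a (T / N) T = (a N).start := by
    rw [← chainPath_natCast_mul hτ N, hTN]
  have hH1 : IsH1On (chainPath a (T / N)) (chainVelocity a (T / N)) 0 T := by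
    refine ⟨intervalIntegrable_chainVelocity hr hτ _ _, ?_, fun t ht => ?_⟩
    · simp [norm_chainVelocity hr hτ]
    · rw [integral_chainVelocity ha hr hτ ht.1]
      abel
  refine (psiT_le_of_isH1On hT hH1 (fun t _ => ?_) (hu0 ▸ h0) ?_
    (norm_chainVelocity hr hτ)).trans_eq ?_
  · obtain ⟨k, hk⟩ := chainPath_mem_sphere (τ := T / N) hr t
    exact hφ k _ hk
  · rwa [huT]
  · congr 2
    field_simp

open QuarterArc in
theorem psiT_intLattice_le {v : Fin 3 → Euc 3} (hv : Orthonormal ℝ v)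
    (hvL : ∀ i, v i ∈ intLattice 3) {c : Fin 3 → ℝ} (hc : ∀ i, 0 ≤ c i) (hc01 : c 0 ≤ c 1)
    {T : ℝ} (hT : 0 < T) :
    psiT (fun p : Euc 3 => Metric.infDist p (intLattice 3) ^ 2) ((1 : ℝ) / 4) T
        (∑ i, c i • v i) ≤
      ENNReal.ofReal ((π / 2 * (c 1 + c 2) + 3 * π / 4 / T) ^ 2) := by
  -- The curve ends at `M • v 0 + (R - 1 / 2) • v 1 + K • v 2`, which differs from
  -- `T • ∑ i, c i • v i` by at most `1` in each coordinate.
  set M := ⌊c 0 * T⌋₊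
  set R := ⌊c 1 * T + 1 / 2⌋₊
  set K := ⌊c 2 * T⌋₊ + 1
  have hMR : M ≤ R := Nat.floor_mono (by nlinarith)
  have hM : (M : ℝ) ≤ c 0 * T := Nat.floor_le (mul_nonneg (hc 0) hT.le)
  have hM' : c 0 * T < M + 1 := Nat.lt_floor_add_one _
  have hR : (R : ℝ) ≤ c 1 * T + 1 / 2 := Nat.floor_le (by linarith [mul_nonneg (hc 1) hT.le])
  have hR' : c 1 * T + 1 / 2 < R + 1 := Nat.lt_floor_add_one _
  have hK : (K : ℝ) ≤ c 2 * T + 1 := by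
    simpa [K] using Nat.floor_le (mul_nonneg (hc 2) hT.le)
  have hK' : c 2 * T < K := by simpa [K] using Nat.lt_floor_add_one (c 2 * T)
  refine (psiT_le_of_isChain (a := movePath (staircase v M (R - M))) hT
    (isChain_movePath isValid_staircase)
    (isRound_movePath (isRound_staircase hv)) (fun k p hp => ?_) (N := 2 * (R + K)) (by omega)
    ?_ ?_).trans (ENNReal.ofReal_le_ofReal (pow_le_pow_left₀ (by positivity) ?_ 2))
  · rw [infDist_intLattice_of_mem_sphere (centre_movePath_mem _ (staircase_mem _ hvL) k) hp]
    norm_num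
  · rw [start_staircase_zero, norm_smul, hv.norm_eq_one 1]
    exact Real.le_sqrt_of_sq_le (by norm_num)
  · refine Real.le_sqrt_of_sq_le ?_
    rw [Finset.smul_sum]
    simp_rw [smul_smul]
    rw [norm_sq_start_staircase_sub hv hMR]
    push_cast
    nlinarith
  · calc ((2 * (R + K) : ℕ) : ℝ) * π * (1 / 2) / (2 * T) = (R + K) * π / (2 * T) := by
          push_cast; ring
      _ ≤ ((c 1 + c 2) * T + 3 / 2) * π / (2 * T) := by
          gcongr ?_ * π / _
          linarith
      _ = π / 2 * (c 1 + c 2) + 3 * π / 4 / T := by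
          field_simp
          ring

lemma limsup_le_ofReal_sq_of_le_add_div {f : ℝ → ℝ≥0∞} {A B : ℝ}
    (h : ∀ᶠ T in atTop, f T ≤ ENNReal.ofReal ((A + B / T) ^ 2)) :
    limsup f atTop ≤ ENNReal.ofReal (A ^ 2) := by
  have hlim : Tendsto (fun T => ENNReal.ofReal ((A + B / T) ^ 2)) atTop
      (𝓝 (ENNReal.ofReal (A ^ 2))) := by
    refine (ENNReal.continuous_ofReal.tendsto _).comp ?_
    simpa using
      ((tendsto_const_nhds (x := A)).add ((tendsto_const_nhds (x := B)).div_atTop tendsto_id)).pow 2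
  exact (limsup_le_limsup h).trans hlim.limsup_eq.le

theorem limsup_psiT_intLattice_le {v : Fin 3 → Euc 3} (hv : Orthonormal ℝ v)
    (hvL : ∀ i, v i ∈ intLattice 3) {c : Fin 3 → ℝ} (hc : ∀ i, 0 ≤ c i) (hc01 : c 0 ≤ c 1) :
    limsup (fun T => psiT (fun p : Euc 3 => Metric.infDist p (intLattice 3) ^ 2) ((1 : ℝ) / 4) T
        (∑ i, c i • v i)) atTop ≤ ENNReal.ofReal ((π / 2) ^ 2 * (c 1 + c 2) ^ 2) := by
  rw [← mul_pow]
  refine limsup_le_ofReal_sq_of_le_add_div (B := 3 * π / 4) ?_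
  filter_upwards [eventually_gt_atTop 0] with T hT
  exact psiT_intLattice_le hv hvL hc hc01 hT

lemma EuclideanSpace.orthonormal_single_of_abs_eq_one {ι : Type*} [Fintype ι] [DecidableEq ι]
    {ε : ι → ℝ} (hε : ∀ i, |ε i| = 1) : Orthonormal ℝ fun i => EuclideanSpace.single i (ε i) := by
  rw [orthonormal_iff_ite]
  intro i j
  rw [EuclideanSpace.inner_single_left]
  by_cases hij : i = j
  · subst hij
    simp [← sq, ← sq_abs, hε]
  · simp [hij]

lemma single_intCast_mem_intLattice {n : ℕ} (i : Fin n) (k : ℤ) :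
    EuclideanSpace.single i (k : ℝ) ∈ intLattice n := fun j => by
  by_cases hij : j = i
  · exact ⟨k, by simp [hij]⟩
  · exact ⟨0, by simp [hij]⟩

lemma exists_sorted_signed_basis (w : Euc 3) :
    ∃ (v : Fin 3 → Euc 3) (c : Fin 3 → ℝ), Orthonormal ℝ v ∧ (∀ i, v i ∈ intLattice 3) ∧
      (∀ i, 0 ≤ c i) ∧ c 0 = min (min |w 0| |w 1|) |w 2| ∧ c 0 ≤ c 1 ∧
      c 0 + c 1 + c 2 = |w 0| + |w 1| + |w 2| ∧ w = ∑ i, c i • v i := by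
  obtain ⟨i₀, hi₀⟩ : ∃ i₀, min (min |w 0| |w 1|) |w 2| = |w i₀| := by
    rcases min_choice (min |w 0| |w 1|) |w 2| with h | h <;> rw [h]
    · rcases min_choice |w 0| |w 1| with h' | h' <;> rw [h'] <;> exact ⟨_, rfl⟩
    · exact ⟨_, rfl⟩
  have hmin : ∀ i, |w i₀| ≤ |w i| := by
    rw [← hi₀]
    intro i
    fin_cases i <;> simp
  set σ := Equiv.swap 0 i₀
  have hσ0 : σ 0 = i₀ := Equiv.swap_apply_left 0 i₀
  set ε : Fin 3 → ℤ := fun i => if w i < 0 then -1 else 1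
  have hε : ∀ i, |(ε i : ℝ)| = 1 := fun i => by by_cases h : w i < 0 <;> simp [ε, h]
  set s : Fin 3 → Euc 3 := fun i => EuclideanSpace.single i (ε i : ℝ)
  refine ⟨s ∘ σ, fun i => |w (σ i)|,
    (EuclideanSpace.orthonormal_single_of_abs_eq_one hε).comp σ σ.injective,
    fun i => single_intCast_mem_intLattice _ _, fun i => abs_nonneg _, by simp [hσ0, hi₀],
    by simpa [hσ0] using hmin (σ 1), ?_, ?_⟩
  · simpa [Fin.sum_univ_three] using Equiv.sum_comp σ fun i => |w i|
  · simp only [Function.comp_apply]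
    rw [Equiv.sum_comp σ fun i => |w i| • s i]
    ext j
    have : w j = |w j| * ε j := by
      by_cases h : w j < 0
      · simp [ε, h, abs_of_neg h]
      · simp [ε, h, abs_of_nonneg (not_lt.1 h)]
    fin_cases j <;> simpa [Fin.sum_univ_three, PiLp.single_apply, s] using this

/-- Example 5.4: for `φ(p) = dist²(p, ℤ³)` one has the upper bound
`limsup_T ψ_T^{1/4}(w) ≤ (π/2)²·(max(μ, |w₁|+|w₂|+|w₃|−μ))²`,
with `μ = min(|w₁|,|w₂|,|w₃|)`. -/
theorem psiT_limsup_dist_lattice_3d (w : Euc 3) :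
    Filter.limsup
      (fun T : ℝ => psiT
        (fun p : Euc 3 =>
          (Metric.infDist p {q : Euc 3 | ∀ i : Fin 3, ∃ k : ℤ, q i = (k : ℝ)}) ^ 2)
        ((1 : ℝ) / 4) T w)
      Filter.atTop ≤
    ENNReal.ofReal ((Real.pi / 2) ^ 2 *
      (max (min (min |w 0| |w 1|) |w 2|)
        (|w 0| + |w 1| + |w 2| - min (min |w 0| |w 1|) |w 2|)) ^ 2) := by
  obtain ⟨v, c, hv, hvL, hc, hμ, hc01, hsum, hw⟩ := exists_sorted_signed_basis w
  have hS : |w 0| + |w 1| + |w 2| - min (min |w 0| |w 1|) |w 2| = c 1 + c 2 := by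
    rw [← hsum, ← hμ]; ring
  rw [hS, ← hμ, max_eq_right (by linarith [hc 2])]
  conv_lhs => rw [hw]
  exact limsup_psiT_intLattice_le hv hvL hc hc01
end
end
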